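/- arXiv:1609.02131 — 2 statements merged into one kernel-verified Lean document; each statement's English description precedes it below -/
import Mathlib

section
/- Let β > 1 and k ≥ 2 with [ℚ(β^{1/k}) : ℚ(β)] = k. Then for every n, H_{kn}(β^{1/k}) = k · H_n(β), and consequently Garsia's entropy satisfies H_{β^{1/k}} = k · H_β. -/
open scoped Classical

/-- The value `∑_{k=1}^n a_k β^{-k}` of a 0-1 word `a`. -/
noncomputable def wordVal (β : ℝ) {n : ℕ} (a : Fin n → Bool) : ℝ :=
  ∑ i : Fin n, if a i then (1 / β) ^ ((i : ℕ) + 1) else 0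

/-- `D_n(β)`, the (finite) set of values of all 0-1 words of length `n`. -/
noncomputable def Dn (β : ℝ) (n : ℕ) : Finset ℝ :=
  Finset.image (fun a : Fin n → Bool => wordVal β a) Finset.univ

/-- `p_n(x)`, the number of 0-1 words of length `n` with value `x`. -/
noncomputable def pn (β : ℝ) (n : ℕ) (x : ℝ) : ℕ :=
  (Finset.univ.filter (fun a : Fin n → Bool => wordVal β a = x)).card

/-- `H_n(β)`, the entropy of the distribution `{p_n(x)/2^n : x ∈ D_n(β)}`. -/
noncomputable def Hn (β : ℝ) (n : ℕ) : ℝ :=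
  -∑ x ∈ Dn β n, ((pn β n x : ℝ) / 2 ^ n) * Real.log ((pn β n x : ℝ) / 2 ^ n)

open Finset Real Polynomial

/-! ### Basic facts about `pn`, `Dn`, `Hn` -/

lemma Hn_negMulLog (β : ℝ) (n : ℕ) :
    Hn β n = ∑ x ∈ Dn β n, Real.negMulLog ((pn β n x : ℝ) / 2 ^ n) := by
  rw [Hn, ← Finset.sum_neg_distrib]
  simp [Real.negMulLog_eq_neg]

lemma pn_pos (β : ℝ) {n : ℕ} (a : Fin n → Bool) : 0 < pn β n (wordVal β a) :=
  Finset.card_pos.2 ⟨a, by simp [pn]⟩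

lemma pn_le (β : ℝ) (n : ℕ) (x : ℝ) : pn β n x ≤ 2 ^ n := by
  calc pn β n x ≤ Finset.univ.card := Finset.card_filter_le _ _
  _ = 2 ^ n := by simp

lemma pn_eq_zero (β : ℝ) {n : ℕ} {x : ℝ} (hx : x ∉ Dn β n) : pn β n x = 0 := by
  rw [pn, Finset.card_eq_zero, Finset.filter_eq_empty_iff]
  intro a _
  exact fun h => hx (Finset.mem_image.2 ⟨a, Finset.mem_univ a, h⟩)

lemma Hn_nonneg (β : ℝ) (n : ℕ) : 0 ≤ Hn β n := by
  rw [Hn_negMulLog]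
  refine Finset.sum_nonneg fun x _ => Real.negMulLog_nonneg (by positivity) ?_
  rw [div_le_one (by positivity)]
  exact_mod_cast pn_le β n x

lemma sum_words (β : ℝ) (n : ℕ) (f : ℝ → ℝ) :
    ∑ a : Fin n → Bool, f (wordVal β a) = ∑ x ∈ Dn β n, (pn β n x : ℝ) * f x := by
  rw [Finset.sum_comp]
  simp [Dn, pn, smul_eq_mul]

lemma Hn_words (β : ℝ) (n : ℕ) :
    Hn β n = -(∑ a : Fin n → Bool,
      Real.log ((pn β n (wordVal β a) : ℝ) / 2 ^ n)) / 2 ^ n := by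
  rw [sum_words β n (fun x => Real.log ((pn β n x : ℝ) / 2 ^ n)), Hn]
  rw [neg_div, Finset.sum_div, neg_inj]
  exact Finset.sum_congr rfl fun x _ => by ring

/-! ### Monotonicity of `Hn` in `n` -/

lemma wordVal_snoc (β : ℝ) {n : ℕ} (a : Fin n → Bool) (b : Bool) :
    wordVal β (Fin.snoc a b) = wordVal β a + (if b then (1 / β) ^ (n + 1) else 0) := by
  rw [wordVal, Fin.sum_univ_castSucc]
  congr 1
  · exact Finset.sum_congr rfl fun i _ => by rw [Fin.snoc_castSucc, Fin.coe_castSucc]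
  · rw [Fin.snoc_last, Fin.val_last]

lemma pn_succ (β : ℝ) (n : ℕ) (x : ℝ) :
    pn β (n + 1) x = pn β n x + pn β n (x - (1 / β) ^ (n + 1)) := by
  classical
  rw [pn, ← Finset.card_filter_add_card_filter_not
    (fun a : Fin (n + 1) → Bool => a (Fin.last n) = false), Finset.filter_filter,
    Finset.filter_filter]
  congr 1
  · -- last bit false
    rw [pn]
    refine Finset.card_bij' (fun a _ => Fin.init a) (fun w _ => Fin.snoc w false) ?_ ?_ ?_ ?_
    · intro a ha
      simp only [Finset.mem_filter, Finset.mem_univ, true_and] at ha ⊢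
      obtain ⟨h1, h2⟩ := ha
      have := wordVal_snoc β (Fin.init a) (a (Fin.last n))
      rw [Fin.snoc_init_self, h2] at this
      simpa [this] using h1
    · intro w hw
      simp only [Finset.mem_filter, Finset.mem_univ, true_and] at hw ⊢
      refine ⟨?_, ?_⟩
      · rw [wordVal_snoc, hw]; simp
      · simp [Fin.snoc_last]
    · intro a ha
      simp only [Finset.mem_filter, Finset.mem_univ, true_and] at ha
      show Fin.snoc (Fin.init a) false = a
      rw [← ha.2, Fin.snoc_init_self]
    · intro w _
      simp
  · -- last bit true
    rw [pn]
    refine Finset.card_bij' (fun a _ => Fin.init a) (fun w _ => Fin.snoc w true) ?_ ?_ ?_ ?_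
    · intro a ha
      simp only [Finset.mem_filter, Finset.mem_univ, true_and, Bool.not_eq_false] at ha ⊢
      obtain ⟨h1, h2⟩ := ha
      have := wordVal_snoc β (Fin.init a) (a (Fin.last n))
      rw [Fin.snoc_init_self, h2] at this
      rw [this] at h1
      simp at h1 ⊢
      linarith
    · intro w hw
      simp only [Finset.mem_filter, Finset.mem_univ, true_and, Bool.not_eq_false] at hw ⊢
      refine ⟨?_, ?_⟩
      · rw [wordVal_snoc]; rw [hw]; simp
      · simp [Fin.snoc_last]
    · intro a ha
      simp only [Finset.mem_filter, Finset.mem_univ, true_and, Bool.not_eq_false] at ha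
      show Fin.snoc (Fin.init a) true = a
      rw [← ha.2, Fin.snoc_init_self]
    · intro w _
      simp

lemma mem_Dn_succ_left (β : ℝ) {n : ℕ} {x : ℝ} (hx : x ∈ Dn β n) : x ∈ Dn β (n + 1) := by
  obtain ⟨a, -, ha⟩ := Finset.mem_image.1 hx
  refine Finset.mem_image.2 ⟨Fin.snoc a false, Finset.mem_univ _, ?_⟩
  rw [wordVal_snoc, ha]; simp

lemma mem_Dn_succ_right (β : ℝ) {n : ℕ} {x : ℝ} (hx : x ∈ Dn β n) :
    x + (1 / β) ^ (n + 1) ∈ Dn β (n + 1) := by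
  obtain ⟨a, -, ha⟩ := Finset.mem_image.1 hx
  refine Finset.mem_image.2 ⟨Fin.snoc a true, Finset.mem_univ _, ?_⟩
  rw [wordVal_snoc, ha]; simp

lemma sumA (β : ℝ) (n : ℕ) :
    ∑ x ∈ Dn β (n + 1), Real.negMulLog ((pn β n x : ℝ) / 2 ^ n) = Hn β n := by
  rw [Hn_negMulLog]
  refine (Finset.sum_subset (fun x hx => mem_Dn_succ_left β hx) fun x _ hx => ?_).symm
  rw [pn_eq_zero β hx]
  simp [Real.negMulLog]

lemma sumB (β : ℝ) (n : ℕ) :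
    ∑ x ∈ Dn β (n + 1), Real.negMulLog ((pn β n (x - (1 / β) ^ (n + 1)) : ℝ) / 2 ^ n)
      = Hn β n := by
  have himg : (Dn β n).image (· + (1 / β) ^ (n + 1)) ⊆ Dn β (n + 1) := by
    intro x hx
    obtain ⟨y, hy, rfl⟩ := Finset.mem_image.1 hx
    exact mem_Dn_succ_right β hy
  rw [← Finset.sum_subset himg ?_]
  · rw [Finset.sum_image (by intro a _ b _ h; exact add_right_cancel h)]
    rw [Hn_negMulLog]
    refine Finset.sum_congr rfl fun y _ => by rw [add_sub_cancel_right]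
  · intro x _ hx
    have : x - (1 / β) ^ (n + 1) ∉ Dn β n := by
      intro hmem
      exact hx (Finset.mem_image.2 ⟨_, hmem, by ring⟩)
    rw [pn_eq_zero β this]
    simp [Real.negMulLog]

lemma Hn_mono (β : ℝ) (n : ℕ) : Hn β n ≤ Hn β (n + 1) := by
  rw [Hn_negMulLog β (n + 1)]
  have key : ∀ x ∈ Dn β (n + 1),
      (1 / 2 : ℝ) * Real.negMulLog ((pn β n x : ℝ) / 2 ^ n)
        + (1 / 2 : ℝ) * Real.negMulLog ((pn β n (x - (1 / β) ^ (n + 1)) : ℝ) / 2 ^ n)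
      ≤ Real.negMulLog ((pn β (n + 1) x : ℝ) / 2 ^ (n + 1)) := by
    intro x _
    have hc := Real.concaveOn_negMulLog.2
      (show ((pn β n x : ℝ) / 2 ^ n) ∈ Set.Ici (0 : ℝ) by
        simp only [Set.mem_Ici]; positivity)
      (show ((pn β n (x - (1 / β) ^ (n + 1)) : ℝ) / 2 ^ n) ∈ Set.Ici (0 : ℝ) by
        simp only [Set.mem_Ici]; positivity)
      (by norm_num : (0:ℝ) ≤ 1/2) (by norm_num : (0:ℝ) ≤ 1/2) (by norm_num)
    have heq : ((pn β (n + 1) x : ℝ) / 2 ^ (n + 1))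
        = (1/2 : ℝ) • ((pn β n x : ℝ) / 2 ^ n)
          + (1/2 : ℝ) • ((pn β n (x - (1 / β) ^ (n + 1)) : ℝ) / 2 ^ n) := by
      rw [pn_succ, smul_eq_mul, smul_eq_mul]
      push_cast
      ring
    rw [heq]
    simpa using hc
  calc Hn β n = (1/2 : ℝ) * Hn β n + (1/2 : ℝ) * Hn β n := by ring
  _ = ∑ x ∈ Dn β (n + 1), ((1 / 2 : ℝ) * Real.negMulLog ((pn β n x : ℝ) / 2 ^ n)
        + (1 / 2 : ℝ) * Real.negMulLog ((pn β n (x - (1 / β) ^ (n + 1)) : ℝ) / 2 ^ n)) := by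
      rw [Finset.sum_add_distrib, ← Finset.mul_sum, ← Finset.mul_sum, sumA, sumB]
  _ ≤ _ := Finset.sum_le_sum key

lemma Hn_monotone (β : ℝ) : Monotone (Hn β) :=
  monotone_nat_of_le_succ (Hn_mono β)

/-! ### Linear independence of powers of `β₀` over `ℚ(β)` -/

lemma powers_indep (β β₀ : ℝ) (k : ℕ) (hk : 0 < k) (hβ₀ : β₀ ^ k = β)
    (hdeg : Module.finrank (IntermediateField.adjoin ℚ {β})
      (IntermediateField.adjoin (IntermediateField.adjoin ℚ {β}) {β₀}) = k)
    (c : Fin k → (IntermediateField.adjoin ℚ {β}))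
    (hsum : ∑ i : Fin k, (c i : ℝ) * β₀ ^ (i : ℕ) = 0) : ∀ i, c i = 0 := by
  have hβF : β ∈ IntermediateField.adjoin ℚ {β} :=
    IntermediateField.subset_adjoin ℚ {β} rfl
  have hint : IsIntegral (IntermediateField.adjoin ℚ {β}) β₀ := by
    refine ⟨X ^ k - C ⟨β, hβF⟩, Polynomial.monic_X_pow_sub_C _ hk.ne', ?_⟩
    simp [Polynomial.eval₂_sub, hβ₀]
  have hnd : (minpoly (IntermediateField.adjoin ℚ {β}) β₀).natDegree = k := by
    have := IntermediateField.adjoin.finrank hint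
    rw [hdeg] at this
    exact this.symm
  set p : Polynomial (IntermediateField.adjoin ℚ {β}) :=
    ∑ i : Fin k, Polynomial.monomial (i : ℕ) (c i) with hp
  have haev : Polynomial.aeval β₀ p = 0 := by
    rw [hp, map_sum]
    simpa [Polynomial.aeval_monomial] using hsum
  have hpz : p = 0 := by
    by_contra hne
    have h1 : (minpoly (IntermediateField.adjoin ℚ {β}) β₀).degree ≤ p.degree :=
      minpoly.degree_le_of_ne_zero _ β₀ hne haev
    have h2 : p.degree < (k : ℕ) := by
      refine lt_of_le_of_lt (Polynomial.degree_sum_le _ _) ?_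
      rw [Finset.sup_lt_iff (by exact_mod_cast WithBot.bot_lt_coe k)]
      intro i _
      exact lt_of_le_of_lt (Polynomial.degree_monomial_le _ _)
        (by exact_mod_cast i.isLt)
    have h3 : (minpoly (IntermediateField.adjoin ℚ {β}) β₀).degree = (k : ℕ) := by
      rw [Polynomial.degree_eq_natDegree (minpoly.ne_zero hint), hnd]
    exact absurd (lt_of_le_of_lt h1 h2) (by rw [h3]; exact lt_irrefl _)
  intro i
  have hco : p.coeff (i : ℕ) = c i := by
    rw [hp, Polynomial.finset_sum_coeff]
    rw [Finset.sum_congr rfl (fun j _ => Polynomial.coeff_monomial)]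
    simp [Fin.val_inj]
  rw [hpz] at hco
  simpa using hco.symm

lemma wordVal_mem (β : ℝ) {n : ℕ} (a : Fin n → Bool) :
    wordVal β a ∈ IntermediateField.adjoin ℚ {β} := by
  refine sum_mem fun i _ => ?_
  split
  · refine pow_mem ?_ _
    rw [one_div]
    exact inv_mem (IntermediateField.subset_adjoin ℚ {β} rfl)
  · exact zero_mem _

lemma comb_inj (β β₀ : ℝ) (k : ℕ) (hk : 0 < k) (hβ₀ : β₀ ^ k = β)
    (hdeg : Module.finrank (IntermediateField.adjoin ℚ {β})
      (IntermediateField.adjoin (IntermediateField.adjoin ℚ {β}) {β₀}) = k)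
    (v w : Fin k → ℝ) (hv : ∀ i, v i ∈ IntermediateField.adjoin ℚ {β})
    (hw : ∀ i, w i ∈ IntermediateField.adjoin ℚ {β})
    (h : ∑ i : Fin k, β₀ ^ (k - 1 - (i : ℕ)) * v i
       = ∑ i : Fin k, β₀ ^ (k - 1 - (i : ℕ)) * w i) : v = w := by
  have key : ∀ i : Fin k, v i.rev - w i.rev = 0 := by
    have hc : ∀ i : Fin k, v i.rev - w i.rev ∈ IntermediateField.adjoin ℚ {β} :=
      fun i => sub_mem (hv _) (hw _)
    have := powers_indep β β₀ k hk hβ₀ hdeg (fun i => ⟨v i.rev - w i.rev, hc i⟩) ?_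
    · intro i
      simpa using congrArg Subtype.val (this i)
    · have hrw : ∑ i : Fin k, (v i.rev - w i.rev) * β₀ ^ (i : ℕ)
          = ∑ i : Fin k, β₀ ^ (k - 1 - (i : ℕ)) * (v i - w i) := by
        rw [← Equiv.sum_comp (Fin.revPerm : Equiv.Perm (Fin k))
          (fun i => β₀ ^ (k - 1 - (i : ℕ)) * (v i - w i))]
        refine Finset.sum_congr rfl fun i _ => ?_
        have hi : k - 1 - ((i.rev : Fin k) : ℕ) = (i : ℕ) := by
          rw [Fin.val_rev]; omega
        rw [Fin.revPerm_apply, hi, mul_comm]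
      push_cast
      rw [hrw]
      simp only [mul_sub]
      rw [Finset.sum_sub_distrib, h, sub_self]
  funext j
  have := key j.rev
  rw [Fin.rev_rev] at this
  linarith

/-! ### Splitting words of length `k * n` -/

def idx (k n : ℕ) : Fin k × Fin n ≃ Fin (k * n) :=
  (Equiv.prodComm _ _).trans ((finProdFinEquiv).trans (finCongr (Nat.mul_comm n k)))

lemma idx_val (k n : ℕ) (i : Fin k) (m : Fin n) :
    ((idx k n (i, m)) : ℕ) = (i : ℕ) + k * (m : ℕ) := by
  simp [idx, finProdFinEquiv]

def wsplit (k n : ℕ) : (Fin (k * n) → Bool) ≃ (Fin k → Fin n → Bool) :=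
  ((idx k n).arrowCongr (Equiv.refl Bool)).symm.trans (Equiv.curry _ _ _)

lemma wsplit_apply (k n : ℕ) (a : Fin (k * n) → Bool) (i : Fin k) (m : Fin n) :
    wsplit k n a i m = a (idx k n (i, m)) := rfl

lemma wordVal_split (β β₀ : ℝ) (k n : ℕ) (hk : 0 < k) (hb : β₀ ≠ 0)
    (hβ₀ : β₀ ^ k = β) (a : Fin (k * n) → Bool) :
    wordVal β₀ a = ∑ i : Fin k, β₀ ^ (k - 1 - (i : ℕ)) * wordVal β (wsplit k n a i) := by
  rw [wordVal, ← Equiv.sum_comp (idx k n)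
    (fun j => if a j then (1 / β₀) ^ ((j : ℕ) + 1) else 0), Fintype.sum_prod_type]
  refine Finset.sum_congr rfl fun i _ => ?_
  rw [wordVal, Finset.mul_sum]
  refine Finset.sum_congr rfl fun m _ => ?_
  rw [wsplit_apply, idx_val]
  by_cases h : a (idx k n (i, m))
  · simp only [h, if_true]
    rw [div_pow, one_pow, div_pow, one_pow, ← hβ₀, ← pow_mul, mul_one_div,
      div_eq_div_iff (pow_ne_zero _ hb) (pow_ne_zero _ hb), mul_comm (1 : ℝ) _,
      mul_one, ← pow_add]
    congr 1
    have hik : (i : ℕ) < k := i.isLt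
    rw [Nat.mul_add, Nat.mul_one]
    omega
  · simp [h]

lemma pn_split (β β₀ : ℝ) (k n : ℕ) (hk : 0 < k) (hb : β₀ ≠ 0) (hβ₀ : β₀ ^ k = β)
    (hinj : ∀ v w : Fin k → ℝ, (∀ i, v i ∈ IntermediateField.adjoin ℚ {β}) →
      (∀ i, w i ∈ IntermediateField.adjoin ℚ {β}) →
      ∑ i : Fin k, β₀ ^ (k - 1 - (i : ℕ)) * v i
        = ∑ i : Fin k, β₀ ^ (k - 1 - (i : ℕ)) * w i → v = w)
    (hmem : ∀ (m : ℕ) (w : Fin m → Bool), wordVal β w ∈ IntermediateField.adjoin ℚ {β})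
    (a : Fin (k * n) → Bool) :
    pn β₀ (k * n) (wordVal β₀ a) = ∏ i : Fin k, pn β n (wordVal β (wsplit k n a i)) := by
  have hiff : ∀ a' : Fin (k * n) → Bool,
      wordVal β₀ a' = wordVal β₀ a ↔
        ∀ i : Fin k, wordVal β (wsplit k n a' i) = wordVal β (wsplit k n a i) := by
    intro a'
    constructor
    · intro h
      have := hinj (fun i => wordVal β (wsplit k n a' i))
        (fun i => wordVal β (wsplit k n a i)) (fun i => hmem _ _) (fun i => hmem _ _) ?_
      · exact fun i => congrFun this i
      · rw [← wordVal_split β β₀ k n hk hb hβ₀ a', ← wordVal_split β β₀ k n hk hb hβ₀ a, h]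
    · intro h
      rw [wordVal_split β β₀ k n hk hb hβ₀ a', wordVal_split β β₀ k n hk hb hβ₀ a]
      exact Finset.sum_congr rfl fun i _ => by rw [h i]
  have e : {a' : Fin (k * n) → Bool // wordVal β₀ a' = wordVal β₀ a} ≃
      ∀ i : Fin k, {w : Fin n → Bool // wordVal β w = wordVal β (wsplit k n a i)} :=
    ((wsplit k n).subtypeEquiv hiff).trans (Equiv.subtypePiEquivPi)
  have h1 : pn β₀ (k * n) (wordVal β₀ a)
      = Fintype.card {a' : Fin (k * n) → Bool // wordVal β₀ a' = wordVal β₀ a} := by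
    rw [Fintype.card_subtype]; rfl
  rw [h1, Fintype.card_congr e, Fintype.card_pi]
  exact Finset.prod_congr rfl fun i _ => by rw [Fintype.card_subtype]; rfl

/-! ### The entropy multiplication formula -/

lemma Hn_mul (β β₀ : ℝ) (k n : ℕ) (hk : 0 < k)
    (hps : ∀ a : Fin (k * n) → Bool,
      pn β₀ (k * n) (wordVal β₀ a) = ∏ i : Fin k, pn β n (wordVal β (wsplit k n a i))) :
    Hn β₀ (k * n) = k * Hn β n := by
  have h2n : ((2 : ℝ) ^ (k * n)) = (2 ^ n) ^ (k - 1) * 2 ^ n := by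
    rw [← pow_mul, ← pow_add]
    congr 1
    rw [← Nat.mul_succ, Nat.sub_one, Nat.succ_pred_eq_of_pos hk, Nat.mul_comm]
  have hlog : ∀ a : Fin (k * n) → Bool,
      Real.log ((pn β₀ (k * n) (wordVal β₀ a) : ℝ) / 2 ^ (k * n))
        = ∑ i : Fin k, Real.log ((pn β n (wordVal β (wsplit k n a i)) : ℝ) / 2 ^ n) := by
    intro a
    rw [← Real.log_prod (fun i _ => ne_of_gt (div_pos
      (by exact_mod_cast pn_pos β (wsplit k n a i)) (by positivity)))]
    congr 1
    rw [Finset.prod_div_distrib, hps a, Nat.cast_prod, Finset.prod_const,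
      Finset.card_univ, Fintype.card_fin, ← pow_mul]
    congr 1
    rw [Nat.mul_comm]
  set S := ∑ a : Fin n → Bool, Real.log ((pn β n (wordVal β a) : ℝ) / 2 ^ n) with hS
  have hsum : ∑ a : Fin (k * n) → Bool, ∑ i : Fin k,
      Real.log ((pn β n (wordVal β (wsplit k n a i)) : ℝ) / 2 ^ n)
      = k * (((2 : ℝ) ^ n) ^ (k - 1) * S) := by
    rw [Fintype.sum_equiv (wsplit k n) _
      (fun b => ∑ i : Fin k, Real.log ((pn β n (wordVal β (b i)) : ℝ) / 2 ^ n))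
      (fun a => rfl)]
    rw [Finset.sum_comm]
    have hone : ∀ i : Fin k, ∑ b : Fin k → (Fin n → Bool),
        Real.log ((pn β n (wordVal β (b i)) : ℝ) / 2 ^ n) = ((2 : ℝ) ^ n) ^ (k - 1) * S := by
      intro i
      rw [← Fintype.piFinset_univ, Fintype.sum_piFinset_apply
        (fun w => Real.log ((pn β n (wordVal β w) : ℝ) / 2 ^ n)) Finset.univ i]
      simp [hS, nsmul_eq_mul]
    rw [Finset.sum_congr rfl (fun i _ => hone i), Finset.sum_const, Finset.card_univ,
      Fintype.card_fin, nsmul_eq_mul]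
  rw [Hn_words β₀ (k * n), Hn_words β n]
  rw [Finset.sum_congr rfl (fun a _ => hlog a), hsum, h2n, ← hS]
  have h1 : ((2 : ℝ) ^ n) ≠ 0 := by positivity
  have h2 : ((2 : ℝ) ^ n) ^ (k - 1) ≠ 0 := by positivity
  field_simp

/-! ### The main theorem -/

theorem garsia_entropy_root (β : ℝ) (hβ : 1 < β) (k : ℕ) (hk : 2 ≤ k)
    (β₀ : ℝ) (hβ₀pos : 0 < β₀) (hβ₀ : β₀ ^ k = β)
    (hdeg : Module.finrank (IntermediateField.adjoin ℚ {β})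
      (IntermediateField.adjoin (IntermediateField.adjoin ℚ {β}) {β₀}) = k) :
    (∀ n : ℕ, Hn β₀ (k * n) = k * Hn β n) ∧
    (∀ Hβ : ℝ,
      Filter.Tendsto (fun n : ℕ => Hn β n / (n * Real.log β)) Filter.atTop (nhds Hβ) →
      Filter.Tendsto (fun n : ℕ => Hn β₀ n / (n * Real.log β₀)) Filter.atTop
        (nhds (k * Hβ))) := by
  have hk0 : 0 < k := by omega
  have hb : β₀ ≠ 0 := ne_of_gt hβ₀pos
  have hH : ∀ n : ℕ, Hn β₀ (k * n) = k * Hn β n := by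
    intro n
    refine Hn_mul β β₀ k n hk0 ?_
    intro a
    exact pn_split β β₀ k n hk0 hb hβ₀
      (fun v w hv hw h => comb_inj β β₀ k hk0 hβ₀ hdeg v w hv hw h)
      (fun m w => wordVal_mem β w) a
  refine ⟨hH, ?_⟩
  intro Hβ hr
  -- basic positivity facts
  have hβ₀1 : 1 < β₀ := by
    by_contra hle
    push_neg at hle
    have : β₀ ^ k ≤ 1 := pow_le_one₀ hβ₀pos.le hle
    rw [hβ₀] at this; linarith
  have hlogβ₀ : 0 < Real.log β₀ := Real.log_pos hβ₀1
  have hlogβ : 0 < Real.log β := Real.log_pos hβ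
  have hlogeq : Real.log β = k * Real.log β₀ := by
    rw [← hβ₀, Real.log_pow]
  -- `n / k → ∞`
  have hdiv : Filter.Tendsto (fun n : ℕ => n / k) Filter.atTop Filter.atTop := by
    refine Filter.tendsto_atTop_atTop.2 fun b => ⟨k * b, fun n hn => ?_⟩
    rw [Nat.le_div_iff_mul_le hk0, Nat.mul_comm]
    exact hn
  have hdiv1 : Filter.Tendsto (fun n : ℕ => n / k + 1) Filter.atTop Filter.atTop := by
    refine Filter.tendsto_atTop_atTop.2 fun b => ⟨k * b, fun n hn => ?_⟩
    have : b ≤ n / k := by rw [Nat.le_div_iff_mul_le hk0, Nat.mul_comm]; exact hn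
    omega
  -- the ratio `k * (n/k) / n → 1`
  have hs : Filter.Tendsto (fun n : ℕ => ((k * (n / k) : ℕ) : ℝ) / n)
      Filter.atTop (nhds 1) := by
    have hlow : Filter.Tendsto (fun n : ℕ => 1 - (k : ℝ) / n) Filter.atTop (nhds 1) := by
      have h0 : Filter.Tendsto (fun n : ℕ => (1 : ℝ) - (k : ℝ) / n)
          Filter.atTop (nhds (1 - 0)) :=
        (tendsto_const_nhds (x := (1:ℝ))).sub (tendsto_const_div_atTop_nhds_zero_nat (k : ℝ))
      simpa using h0
    refine tendsto_of_tendsto_of_tendsto_of_le_of_le' hlow tendsto_const_nhds ?_ ?_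
    · filter_upwards [Filter.eventually_ge_atTop 1] with n hn
      have hmod : k * (n / k) + n % k = n := Nat.div_add_mod n k
      have hmlt : n % k < k := Nat.mod_lt n hk0
      have hn0 : (0 : ℝ) < (n : ℝ) := by exact_mod_cast hn
      have h1 : (n : ℝ) - k ≤ ((k * (n / k) : ℕ) : ℝ) := by
        have : (n : ℝ) = ((k * (n / k) : ℕ) : ℝ) + ((n % k : ℕ) : ℝ) := by
          exact_mod_cast hmod.symm
        have h2 : ((n % k : ℕ) : ℝ) ≤ k := by exact_mod_cast hmlt.le
        linarith
      have heq : 1 - (k : ℝ) / n = ((n : ℝ) - k) / n := by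
        field_simp
      rw [heq]
      exact div_le_div_of_nonneg_right h1 hn0.le
    · filter_upwards [Filter.eventually_ge_atTop 1] with n hn
      have hn0 : (0 : ℝ) < (n : ℝ) := by exact_mod_cast hn
      rw [div_le_one hn0]
      exact_mod_cast Nat.mul_div_le n k
  -- lower ratio `k^2 * (n/k) / n → k`
  have hρ : Filter.Tendsto (fun n : ℕ => (k : ℝ) ^ 2 * ((n / k : ℕ) : ℝ) / n)
      Filter.atTop (nhds (k : ℝ)) := by
    have := hs.const_mul (k : ℝ)
    rw [mul_one] at this
    refine this.congr fun n => ?_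
    push_cast
    ring
  -- upper ratio `k^2 * (n/k + 1) / n → k`
  have hρ' : Filter.Tendsto (fun n : ℕ => (k : ℝ) ^ 2 * (((n / k : ℕ) : ℝ) + 1) / n)
      Filter.atTop (nhds (k : ℝ)) := by
    have := hρ.add (tendsto_const_div_atTop_nhds_zero_nat ((k : ℝ) ^ 2))
    rw [add_zero] at this
    refine this.congr fun n => ?_
    ring
  -- the composed entropy ratios
  have hrL : Filter.Tendsto (fun n : ℕ =>
      (Hn β (n / k) / ((n / k : ℕ) * Real.log β)) * ((k : ℝ) ^ 2 * ((n / k : ℕ) : ℝ) / n))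
      Filter.atTop (nhds (Hβ * k)) :=
    (hr.comp hdiv).mul hρ
  have hrU : Filter.Tendsto (fun n : ℕ =>
      (Hn β (n / k + 1) / ((n / k + 1 : ℕ) * Real.log β))
        * ((k : ℝ) ^ 2 * (((n / k : ℕ) : ℝ) + 1) / n))
      Filter.atTop (nhds (Hβ * k)) :=
    (hr.comp hdiv1).mul hρ'
  have hlogdiv : Real.log β₀ = Real.log β / k := by
    rw [hlogeq]
    field_simp
  have hkR : (k : ℝ) ≠ 0 := by positivity
  have hlogne : Real.log β ≠ 0 := ne_of_gt hlogβ
  -- identify with the explicit bounding sequences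
  have hLeq : ∀ n : ℕ, n ≥ k →
      (Hn β (n / k) / ((n / k : ℕ) * Real.log β)) * ((k : ℝ) ^ 2 * ((n / k : ℕ) : ℝ) / n)
        = (k : ℝ) * Hn β (n / k) / (n * Real.log β₀) := by
    intro n hn
    have hm1 : 1 ≤ n / k := (Nat.one_le_div_iff hk0).2 hn
    have hm0 : ((n / k : ℕ) : ℝ) ≠ 0 := Nat.cast_ne_zero.2 (Nat.one_le_iff_ne_zero.1 hm1)
    have hn0 : (n : ℝ) ≠ 0 := Nat.cast_ne_zero.2 (by omega)
    rw [hlogdiv]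
    field_simp
  have hUeq : ∀ n : ℕ, n ≥ k →
      (Hn β (n / k + 1) / ((n / k + 1 : ℕ) * Real.log β))
          * ((k : ℝ) ^ 2 * (((n / k : ℕ) : ℝ) + 1) / n)
        = (k : ℝ) * Hn β (n / k + 1) / (n * Real.log β₀) := by
    intro n hn
    have hm0 : ((n / k + 1 : ℕ) : ℝ) ≠ 0 := Nat.cast_ne_zero.2 (Nat.succ_ne_zero _)
    have hm0' : ((n / k : ℕ) : ℝ) + 1 ≠ 0 := by
      push_cast at hm0 ⊢
      exact hm0
    have hn0 : (n : ℝ) ≠ 0 := Nat.cast_ne_zero.2 (by omega)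
    rw [hlogdiv]
    push_cast
    field_simp
  -- squeeze
  rw [show (k : ℝ) * Hβ = Hβ * k from mul_comm _ _]
  refine tendsto_of_tendsto_of_tendsto_of_le_of_le' hrL hrU ?_ ?_
  · filter_upwards [Filter.eventually_ge_atTop k] with n hn
    rw [hLeq n hn]
    have hn0 : (0 : ℝ) < (n : ℝ) := by
      have : 0 < n := by omega
      exact_mod_cast this
    have hpos : (0 : ℝ) < (n : ℝ) * Real.log β₀ := by positivity
    have hmono : (k : ℝ) * Hn β (n / k) ≤ Hn β₀ n := by
      rw [← hH (n / k)]
      exact Hn_monotone β₀ (Nat.mul_div_le n k)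
    exact div_le_div_of_nonneg_right hmono hpos.le
  · filter_upwards [Filter.eventually_ge_atTop k] with n hn
    rw [hUeq n hn]
    have hn0 : (0 : ℝ) < (n : ℝ) := by
      have : 0 < n := by omega
      exact_mod_cast this
    have hpos : (0 : ℝ) < (n : ℝ) * Real.log β₀ := by positivity
    have hmono : Hn β₀ n ≤ (k : ℝ) * Hn β (n / k + 1) := by
      rw [← hH (n / k + 1)]
      refine Hn_monotone β₀ ?_
      have h1 := Nat.div_add_mod n k
      have h2 := Nat.mod_lt n hk0
      rw [Nat.mul_add, Nat.mul_one]
      omega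
    exact div_le_div_of_nonneg_right hmono hpos.le
end

section
/- Let β ∈ (1,2). Suppose there exist λ ∈ (1,2) and C > 0 such that for all n and all x ∈ [0, 1/(β-1)], the number of words (a_1,…,a_n) ∈ {0,1}^n that can be extended to a β-expansion of x is at most C λ^n. Then Garsia's entropy satisfies H_β ≥ log(2/λ)/log β. -/
open scoped Classical

/-- `(a_1,…,a_n)` is a prefix of a β-expansion of `x`: it extends to an infinite
0-1 sequence whose value is `x`. -/
def IsPrefixOfExpansion (β : ℝ) {n : ℕ} (a : Fin n → Bool) (x : ℝ) : Prop :=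
  ∃ c : ℕ → Bool, (∀ i : Fin n, c (i : ℕ) = a i) ∧
    x = ∑' j : ℕ, if c j then (1 / β) ^ (j + 1) else 0

/-- `#E_n(x;β)`, the number of 0-1 words of length `n` which may act as prefixes
of β-expansions of `x`. -/
noncomputable def Ecard (β : ℝ) (n : ℕ) (x : ℝ) : ℕ :=
  (Finset.univ.filter (fun a : Fin n → Bool => IsPrefixOfExpansion β a x)).card

-- sum of pn over Dn = 2^n
lemma sum_pn (β : ℝ) (n : ℕ) : ∑ x ∈ Dn β n, pn β n x = 2 ^ n := by
  have h := Finset.card_eq_sum_card_image (fun a : Fin n → Bool => wordVal β a) Finset.univ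
  simpa [Dn, pn, Finset.card_univ] using h.symm

-- word implies prefix
lemma isPrefix_of_wordVal (β : ℝ) {n : ℕ} (a : Fin n → Bool) :
    IsPrefixOfExpansion β a (wordVal β a) := by
  refine ⟨fun j => if h : j < n then a ⟨j, h⟩ else false, fun i => by simp [i.isLt], ?_⟩
  have h0 : ∀ j ∉ Finset.range n,
      (if (if h : j < n then a ⟨j, h⟩ else false) = true then (1/β)^(j+1) else 0) = 0 := by
    intro j hj
    simp [Finset.mem_range.not.mp hj]
  rw [tsum_eq_sum h0, wordVal, ← Fin.sum_univ_eq_sum_range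
    (fun j => if (if h : j < n then a ⟨j, h⟩ else false) = true then (1/β)^(j+1) else 0)]
  exact Finset.sum_congr rfl fun i _ => by simp [i.isLt]

lemma pn_le_Ecard (β : ℝ) (n : ℕ) (x : ℝ) : pn β n x ≤ Ecard β n x := by
  apply Finset.card_le_card
  intro a ha
  simp only [Finset.mem_filter, Finset.mem_univ, true_and] at ha ⊢
  rw [← ha]
  exact isPrefix_of_wordVal β a

lemma mem_Icc_of_mem_Dn (β : ℝ) (hβ1 : 1 < β) {n : ℕ} {x : ℝ} (hx : x ∈ Dn β n) :
    x ∈ Set.Icc 0 (1 / (β - 1)) := by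
  obtain ⟨a, -, rfl⟩ := Finset.mem_image.mp hx
  have hr0 : (0:ℝ) < 1 / β := by positivity
  have hr1 : 1 / β < 1 := by
    rw [div_lt_one (by linarith)]; linarith
  constructor
  · exact Finset.sum_nonneg fun i _ => by positivity
  · have h1 : wordVal β a ≤ ∑ i : Fin n, (1/β) ^ ((i:ℕ)+1) := by
      apply Finset.sum_le_sum
      intro i _
      split <;> [exact le_refl _; positivity]
    have h2 : ∑ i : Fin n, (1/β) ^ ((i:ℕ)+1) ≤ ∑' j : ℕ, (1/β) ^ (j+1) := by
      rw [Fin.sum_univ_eq_sum_range (fun j => (1/β)^(j+1))]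
      exact Summable.sum_le_tsum _ (fun j _ => by positivity)
        ((summable_geometric_of_lt_one hr0.le hr1).comp_injective (add_left_injective 1))
    have h3 : ∑' j : ℕ, (1/β) ^ (j+1) = 1 / (β - 1) := by
      have : ∑' j : ℕ, (1/β) ^ (j+1) = (1/β) * ∑' j : ℕ, (1/β) ^ j := by
        rw [← tsum_mul_left]
        exact tsum_congr fun j => by ring
      rw [this, tsum_geometric_of_lt_one hr0.le hr1]
      have hb : β ≠ 0 := by linarith
      have hb1 : β - 1 ≠ 0 := by intro h; linarith [sub_eq_zero.mp h]
      field_simp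
    calc wordVal β a ≤ _ := h1
      _ ≤ _ := h2
      _ = _ := h3

lemma Hn_lower (β : ℝ) (hβ1 : 1 < β) (lam C : ℝ) (hlam1 : 1 < lam) (hlam2 : lam < 2)
    (hC : 0 < C)
    (hbound : ∀ (n : ℕ) (x : ℝ), x ∈ Set.Icc 0 (1 / (β - 1)) →
      (Ecard β n x : ℝ) ≤ C * lam ^ n)
    (n : ℕ) : (n : ℝ) * Real.log (2 / lam) - Real.log C ≤ Hn β n := by
  set K : ℝ := (n : ℝ) * Real.log (2 / lam) - Real.log C with hK
  have hsum : ∑ x ∈ Dn β n, ((pn β n x : ℝ) / 2 ^ n) = 1 := by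
    rw [← Finset.sum_div]
    rw [div_eq_one_iff_eq (by positivity)]
    exact_mod_cast sum_pn β n
  have key : ∀ x ∈ Dn β n,
      ((pn β n x : ℝ) / 2 ^ n) * K ≤ ((pn β n x : ℝ) / 2 ^ n) * (- Real.log ((pn β n x : ℝ) / 2 ^ n)) := by
    intro x hx
    have hp0 : 0 < pn β n x := by
      obtain ⟨a, -, rfl⟩ := Finset.mem_image.mp hx
      apply Finset.card_pos.mpr
      exact ⟨a, by simp [pn]⟩
    have hpR : (0:ℝ) < (pn β n x : ℝ) := by exact_mod_cast hp0
    have hple : (pn β n x : ℝ) ≤ C * lam ^ n := by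
      calc (pn β n x : ℝ) ≤ (Ecard β n x : ℝ) := by exact_mod_cast pn_le_Ecard β n x
        _ ≤ C * lam ^ n := hbound n x (mem_Icc_of_mem_Dn β hβ1 hx)
    apply mul_le_mul_of_nonneg_left _ (by positivity)
    rw [← Real.log_inv]
    have hinv : ((pn β n x : ℝ) / 2 ^ n)⁻¹ = 2 ^ n / (pn β n x : ℝ) := by
      rw [inv_div]
    rw [hinv]
    have hstep : (2:ℝ) ^ n / (C * lam ^ n) ≤ 2 ^ n / (pn β n x : ℝ) := by
      gcongr
    have hKlog : Real.log ((2:ℝ) ^ n / (C * lam ^ n)) = K := by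
      rw [hK, Real.log_div (by positivity) (by positivity),
        Real.log_mul (by positivity) (by positivity), Real.log_pow, Real.log_pow,
        Real.log_div (by norm_num) (by positivity)]
      ring
    calc K = Real.log ((2:ℝ) ^ n / (C * lam ^ n)) := hKlog.symm
      _ ≤ _ := Real.log_le_log (by positivity) hstep
  have : ∑ x ∈ Dn β n, ((pn β n x : ℝ) / 2 ^ n) * K ≤
      ∑ x ∈ Dn β n, ((pn β n x : ℝ) / 2 ^ n) * (- Real.log ((pn β n x : ℝ) / 2 ^ n)) :=
    Finset.sum_le_sum key
  rw [← Finset.sum_mul, hsum, one_mul] at this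
  refine this.trans (le_of_eq ?_)
  rw [Hn, ← Finset.sum_neg_distrib]
  exact Finset.sum_congr rfl fun x _ => by ring

theorem entropy_ge_of_prefix_count_bound (β : ℝ) (hβ1 : 1 < β) (hβ2 : β < 2)
    (lam C : ℝ) (hlam1 : 1 < lam) (hlam2 : lam < 2) (hC : 0 < C)
    (hbound : ∀ (n : ℕ) (x : ℝ), x ∈ Set.Icc 0 (1 / (β - 1)) →
      (Ecard β n x : ℝ) ≤ C * lam ^ n) :
    ∀ L : ℝ,
      Filter.Tendsto (fun n : ℕ => Hn β n / (n * Real.log β))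
        Filter.atTop (nhds L) →
      Real.log (2 / lam) / Real.log β ≤ L := by
  intro L hL
  have hlogβ : 0 < Real.log β := Real.log_pos hβ1
  set A : ℝ := Real.log (2 / lam)
  set c : ℝ := Real.log C
  -- the comparison sequence
  have hg : Filter.Tendsto
      (fun n : ℕ => A / Real.log β - (c / Real.log β) * (1 / (n : ℝ)))
      Filter.atTop (nhds (A / Real.log β)) := by
    have := tendsto_one_div_atTop_nhds_zero_nat.const_mul (c / Real.log β)
    have h2 := (tendsto_const_nhds (x := A / Real.log β) (f := Filter.atTop (α := ℕ))).sub this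
    simpa using h2
  refine le_of_tendsto_of_tendsto hg hL ?_
  filter_upwards [Filter.eventually_ge_atTop 1] with n hn
  have hn0 : (0:ℝ) < (n : ℝ) := by exact_mod_cast hn
  have heq : A / Real.log β - (c / Real.log β) * (1 / (n : ℝ))
      = ((n : ℝ) * A - c) / ((n : ℝ) * Real.log β) := by
    field_simp
  rw [heq]
  have hHn := Hn_lower β hβ1 lam C hlam1 hlam2 hC hbound n
  exact (div_le_div_iff_of_pos_right (by positivity)).mpr hHn
end
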